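/- Let S_1, S_2, S_3 be Borel subsets of Polish spaces and P a stochastic kernel on S_1 × S_2 given S_3 whose disintegration is P(B × C | s_3) = ∫_C H(B | s_2, s_3) P'(ds_2 | s_3), where P'(C|s_3) = P(S_1 × C|s_3). Suppose the topology on S_1 has a countable base τ_b containing S_1 such that for each finite intersection O of base elements, the family {s_3 ↦ P(O × C | s_3) : C open in S_2} is equicontinuous at a point s_3 ∈ S_3. Then for any sequence s_3^(n) → s_3 there exist a subsequence {n_k} and a set C* ∈ B(S_2) with P'(C* | s_3) = 1 such that H(· | s_2, s_3^(n_k)) converges weakly to H(· | s_2, s_3) for all s_2 ∈ C* as k → ∞. -/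

import Mathlib

/-!
The equicontinuity hypothesis gives, for every finite intersection `A` of basis sets, that
`C ↦ P(A × C | t)` converges to `C ↦ P(A × C | s₃)` uniformly over open `C`, hence, by outer
regularity, uniformly over Borel `C`. Comparing the set integrals `∫_C H(A | s₂, t) dP'(s₂ | t)`
with `∫_C H(A | s₂, s₃) dP'(s₂ | s₃)` on the set `C` where one density dominates the other turns
this into `L¹(P'(· | s₃))`-convergence of `H(A | ·, t)` to `H(A | ·, s₃)`. There are countably many
such `A`, so a diagonal subsequence along which the `L¹` distances are summable converges
`P'(· | s₃)`-a.e. for all `A` at once. Finally, the finite intersections of basis sets form a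
countable basis closed under `∩`; by inclusion–exclusion the measures of their finite unions
converge, which gives `H(G | s₂, s₃) ≤ liminf H(G | s₂, t_k)` for every open `G`, i.e. weak
convergence by the portmanteau theorem.
-/

open MeasureTheory Filter Topology TopologicalSpace BoundedContinuousFunction
open scoped ENNReal

namespace MeasureTheory

variable {α : Type*} [MeasurableSpace α]

theorem abs_measureReal_sub_measureReal_le_one {μ ν : Measure α} [IsProbabilityMeasure μ]
    [IsProbabilityMeasure ν] (s t : Set α) : |μ.real s - ν.real t| ≤ 1 := by
  have hμ : μ.real s ≤ 1 := measureReal_le_one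
  have hν : ν.real t ≤ 1 := measureReal_le_one
  have hμ₀ : 0 ≤ μ.real s := measureReal_nonneg
  have hν₀ : 0 ≤ ν.real t := measureReal_nonneg
  exact abs_sub_le_iff.2 ⟨by linarith, by linarith⟩

theorem integral_le_integral_add_of_forall_measureReal_le {μ ν : Measure α} [IsFiniteMeasure μ]
    [IsFiniteMeasure ν] {f : α → ℝ} (hf : Measurable f) (hf0 : ∀ x, 0 ≤ f x) (hf1 : ∀ x, f x ≤ 1)
    {δ : ℝ} (hδ : ∀ A, MeasurableSet A → μ.real A ≤ ν.real A + δ) :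
    ∫ x, f x ∂μ ≤ ∫ x, f x ∂ν + δ := by
  -- layer cake: both sides are `∫₀¹` of the measures of the superlevel sets of `f`
  have layer (ρ : Measure α) [IsFiniteMeasure ρ] :
      ∫ x, f x ∂ρ = ∫ t in Set.Ioc 0 1, ρ.real {x | t ≤ f x} := by
    have hfint : Integrable f ρ := .of_bound hf.aestronglyMeasurable 1
      (.of_forall fun x ↦ by rw [Real.norm_of_nonneg (hf0 x)]; exact hf1 x)
    exact hfint.integral_eq_integral_Ioc_meas_le (.of_forall hf0) (.of_forall hf1)
  have level_int (ρ : Measure α) [IsFiniteMeasure ρ] :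
      IntegrableOn (fun t ↦ ρ.real {x | t ≤ f x}) (Set.Ioc 0 1) := by
    refine (integrable_const (ρ.real Set.univ)).mono' ?_ (.of_forall fun t ↦ ?_)
    · have : Antitone fun t : ℝ ↦ ρ.real {x | t ≤ f x} := fun s t hst ↦
        measureReal_mono fun x (hx : t ≤ f x) ↦ hst.trans hx
      exact this.measurable.aestronglyMeasurable
    · rw [Real.norm_of_nonneg measureReal_nonneg]
      exact measureReal_mono (Set.subset_univ _)
  rw [layer μ, layer ν]
  calc ∫ t in Set.Ioc 0 1, μ.real {x | t ≤ f x}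
      ≤ ∫ t in Set.Ioc 0 1, (ν.real {x | t ≤ f x} + δ) :=
        setIntegral_mono_on (level_int μ) ((level_int ν).add (integrableOn_const (by simp)))
          measurableSet_Ioc fun t _ ↦ hδ _ (measurableSet_le measurable_const hf)
    _ = (∫ t in Set.Ioc 0 1, ν.real {x | t ≤ f x}) + δ := by
        rw [integral_add (level_int ν) (integrableOn_const (by simp))]
        simp

theorem abs_setIntegral_sub_le_of_forall_abs_measureReal_sub_le {μ ν : Measure α}
    [IsFiniteMeasure μ] [IsFiniteMeasure ν] {f : α → ℝ} (hf : Measurable f) (hf0 : ∀ x, 0 ≤ f x)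
    (hf1 : ∀ x, f x ≤ 1) {δ : ℝ} (hδ : ∀ A, MeasurableSet A → |μ.real A - ν.real A| ≤ δ)
    {A : Set α} (hA : MeasurableSet A) :
    |∫ x in A, f x ∂μ - ∫ x in A, f x ∂ν| ≤ δ := by
  have hδA : ∀ B, MeasurableSet B →
      |(μ.restrict A).real B - (ν.restrict A).real B| ≤ δ := fun B hB ↦ by
    simpa only [measureReal_restrict_apply hB] using hδ _ (hB.inter hA)
  rw [abs_sub_le_iff]
  constructor
  · linarith [integral_le_integral_add_of_forall_measureReal_le (μ := μ.restrict A)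
      (ν := ν.restrict A) hf hf0 hf1 fun B hB ↦ by linarith [(abs_sub_le_iff.1 (hδA B hB)).1]]
  · linarith [integral_le_integral_add_of_forall_measureReal_le (μ := ν.restrict A)
      (ν := μ.restrict A) hf hf0 hf1 fun B hB ↦ by linarith [(abs_sub_le_iff.1 (hδA B hB)).2]]

theorem integral_abs_sub_le_of_forall_abs_setIntegral_sub_le {μ ν : Measure α}
    [IsFiniteMeasure μ] [IsFiniteMeasure ν] {g h : α → ℝ} (hg : Measurable g) (hh : Measurable h)
    (hg0 : ∀ x, 0 ≤ g x) (hg1 : ∀ x, g x ≤ 1) (hh0 : ∀ x, 0 ≤ h x) (hh1 : ∀ x, h x ≤ 1)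
    {δ δ₀ : ℝ} (hgh : ∀ A, MeasurableSet A → |∫ x in A, g x ∂ν - ∫ x in A, h x ∂μ| ≤ δ)
    (hνμ : ∀ A, MeasurableSet A → |ν.real A - μ.real A| ≤ δ₀) :
    ∫ x, |g x - h x| ∂μ ≤ 2 * δ + 3 * δ₀ := by
  have hint {f : α → ℝ} (hf : Measurable f) (hf1 : ∀ x, |f x| ≤ 1) : Integrable f ν :=
    .of_bound hf.aestronglyMeasurable 1 (.of_forall hf1)
  have hgh1 : ∀ x, |g x - h x| ≤ 1 := fun x ↦ abs_sub_le_iff.2 ⟨by linarith [hg1 x, hh0 x],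
    by linarith [hh1 x, hg0 x]⟩
  have hg_int := hint hg fun x ↦ by rw [abs_of_nonneg (hg0 x)]; exact hg1 x
  have hh_int := hint hh fun x ↦ by rw [abs_of_nonneg (hh0 x)]; exact hh1 x
  set A := {x | h x ≤ g x}
  have hA : MeasurableSet A := measurableSet_le hh hg
  have hμν : ∫ x, |g x - h x| ∂μ ≤ ∫ x, |g x - h x| ∂ν + δ₀ :=
    integral_le_integral_add_of_forall_measureReal_le (hg.sub hh).abs (fun x ↦ abs_nonneg _)
      hgh1 fun B hB ↦ by linarith [(abs_sub_le_iff.1 (hνμ B hB)).2]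
  -- on `A` and `Aᶜ` each piece is at most `δ + δ₀` once the integral of `h` is moved to `μ`
  have hsplit : ∫ x, |g x - h x| ∂ν
      = (∫ x in A, g x ∂ν - ∫ x in A, h x ∂ν) + (∫ x in Aᶜ, h x ∂ν - ∫ x in Aᶜ, g x ∂ν) := by
    have habs_int : Integrable (fun x ↦ |g x - h x|) ν :=
      hint (hg.sub hh).abs fun x ↦ by rw [abs_abs]; exact hgh1 x
    rw [← integral_add_compl hA habs_int,
      ← integral_sub hg_int.integrableOn hh_int.integrableOn,
      ← integral_sub hh_int.integrableOn hg_int.integrableOn]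
    congr 1
    · exact setIntegral_congr_fun hA fun x (hx : h x ≤ g x) ↦ abs_of_nonneg (by linarith)
    · refine setIntegral_congr_fun hA.compl fun x (hx : ¬ h x ≤ g x) ↦ ?_
      rw [abs_of_neg (by linarith), neg_sub]
  have hcmp (B : Set α) (hB : MeasurableSet B) :=
    abs_sub_le_iff.1 (abs_setIntegral_sub_le_of_forall_abs_measureReal_sub_le hh hh0 hh1 hνμ hB)
  have h₁ := (abs_sub_le_iff.1 (hgh A hA)).1
  have h₂ := (abs_sub_le_iff.1 (hgh Aᶜ hA.compl)).2
  have h₃ := (hcmp A hA).2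
  have h₄ := (hcmp Aᶜ hA.compl).1
  linarith

theorem abs_measureReal_sub_le_of_forall_isOpen [TopologicalSpace α] {μ ν : Measure α}
    [IsFiniteMeasure μ] [IsFiniteMeasure ν] [(μ + ν).OuterRegular] {δ : ℝ}
    (h : ∀ U, IsOpen U → |μ.real U - ν.real U| ≤ δ) {C : Set α} (hC : MeasurableSet C) :
    |μ.real C - ν.real C| ≤ δ := by
  refine le_of_forall_pos_le_add fun ε hε ↦ ?_
  obtain ⟨U, hCU, hU, -, hUC⟩ :=
    hC.exists_isOpen_sdiff_lt (measure_ne_top (μ + ν) C) (ENNReal.ofReal_pos.2 hε).ne'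
  have hsmall : μ.real (U \ C) + ν.real (U \ C) < ε := by
    rw [← measureReal_add_apply, ← ENNReal.toReal_ofReal hε.le]
    exact ENNReal.toReal_strict_mono ENNReal.ofReal_ne_top hUC
  rw [measureReal_sdiff hCU hC, measureReal_sdiff hCU hC] at hsmall
  have hμ : μ.real C ≤ μ.real U := measureReal_mono hCU
  have hν : ν.real C ≤ ν.real U := measureReal_mono hCU
  have hUdev := abs_sub_le_iff.1 (h U hU)
  rw [abs_sub_le_iff]
  constructor <;> linarith [hUdev.1, hUdev.2]

theorem exists_strictMono_ae_tendsto_zero_of_tendsto_lintegral {ι : Type*} [Countable ι]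
    {μ : Measure α} {g : ℕ → ι → α → ℝ≥0∞} (hg : ∀ n i, AEMeasurable (g n i) μ)
    (h : ∀ i, Tendsto (fun n ↦ ∫⁻ x, g n i x ∂μ) atTop (𝓝 0)) :
    ∃ φ : ℕ → ℕ, StrictMono φ ∧ ∀ᵐ x ∂μ, ∀ i, Tendsto (fun k ↦ g (φ k) i x) atTop (𝓝 0) := by
  obtain ⟨e, he⟩ := Countable.exists_injective_nat ι
  have hev (m : ℕ) : ∀ᶠ n in atTop, ∀ i ∈ {i | e i ≤ m}, ∫⁻ x, g n i x ∂μ < 2⁻¹ ^ m :=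
    ((Set.finite_Iic m).preimage he.injOn).eventually_all.2 fun i _ ↦
      (h i).eventually_lt_const (ENNReal.pow_pos (by simp) m)
  obtain ⟨φ, hφ, hφg⟩ := extraction_forall_of_eventually hev
  refine ⟨φ, hφ, ae_all_iff.2 fun i ↦ ?_⟩
  -- from `k = e i` on, `∫⁻ g (φ k) i < 2⁻¹ ^ k`
  have hsum : ∑' k, ∫⁻ x, g (φ (k + e i)) i x ∂μ ≠ ∞ := by
    refine ne_top_of_le_ne_top (by simp : ∑' k : ℕ, (2⁻¹ : ℝ≥0∞) ^ k ≠ ∞)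
      (ENNReal.tsum_le_tsum fun k ↦ ?_)
    exact (hφg (k + e i) i (by simp)).le.trans
      (pow_le_pow_right_of_le_one' (by norm_num) (by omega))
  rw [← lintegral_tsum fun k ↦ hg _ i] at hsum
  filter_upwards [ae_lt_top' (AEMeasurable.tsum fun k ↦ hg _ i) hsum] with x hx
  exact (tendsto_add_atTop_iff_nat (e i)).1 (ENNReal.tendsto_atTop_zero_of_tsum_ne_top hx.ne)

theorem tendsto_measure_inter_sUnion_of_forall_tendsto {ι : Type*} {l : Filter ι}
    {μ : Measure α} {μs : ι → Measure α} [IsFiniteMeasure μ] [∀ i, IsFiniteMeasure (μs i)]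
    {𝒞 : Set (Set α)} (h𝒞 : ∀ A ∈ 𝒞, MeasurableSet A) (hinter : ∀ A ∈ 𝒞, ∀ B ∈ 𝒞, A ∩ B ∈ 𝒞)
    (hconv : ∀ A ∈ 𝒞, Tendsto (fun i ↦ μs i A) l (𝓝 (μ A))) {F : Set (Set α)} (hF : F.Finite)
    (hF𝒞 : F ⊆ 𝒞) {B : Set α} (hB : B ∈ 𝒞) :
    Tendsto (fun i ↦ μs i (B ∩ ⋃₀ F)) l (𝓝 (μ (B ∩ ⋃₀ F))) := by
  induction F, hF using Set.Finite.induction_on generalizing B with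
  | empty => simpa using tendsto_const_nhds
  | @insert A F _ hF ih =>
    have hA𝒞 : A ∈ 𝒞 := hF𝒞 (Set.mem_insert A F)
    have hF𝒞' : F ⊆ 𝒞 := (Set.subset_insert A F).trans hF𝒞
    have hmeas : MeasurableSet (B ∩ ⋃₀ F) :=
      (h𝒞 B hB).inter (.sUnion hF.countable fun C hC ↦ h𝒞 C (hF𝒞' hC))
    have hunion : B ∩ ⋃₀ insert A F = (B ∩ A) ∪ (B ∩ ⋃₀ F) := by
      rw [Set.sUnion_insert, Set.inter_union_distrib_left]
    have hinter_eq : (B ∩ A) ∩ (B ∩ ⋃₀ F) = (B ∩ A) ∩ ⋃₀ F := by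
      ext x; simp only [Set.mem_inter_iff]; tauto
    have incl_excl (ρ : Measure α) [IsFiniteMeasure ρ] : ρ (B ∩ ⋃₀ insert A F) =
        ρ (B ∩ A) + ρ (B ∩ ⋃₀ F) - ρ ((B ∩ A) ∩ ⋃₀ F) := by
      rw [hunion, ← hinter_eq]
      exact ENNReal.eq_sub_of_add_eq (measure_ne_top _ _) (measure_union_add_inter _ hmeas)
    simp only [incl_excl]
    exact ENNReal.Tendsto.sub ((hconv _ (hinter B hB A hA𝒞)).add (ih hF𝒞' hB))
      (ih hF𝒞' (hinter B hB A hA𝒞)) (.inr (measure_ne_top _ _))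

section Basis

variable [TopologicalSpace α] {𝒞 : Set (Set α)} {ι : Type*} {L : Filter ι}

theorem measure_le_liminf_of_forall_tendsto_of_isTopologicalBasis [OpensMeasurableSpace α]
    (hcount : 𝒞.Countable) (hbasis : IsTopologicalBasis 𝒞)
    (huniv : Set.univ ∈ 𝒞) (hinter : ∀ A ∈ 𝒞, ∀ B ∈ 𝒞, A ∩ B ∈ 𝒞) {μ : Measure α}
    {μs : ι → Measure α} [IsFiniteMeasure μ] [∀ i, IsFiniteMeasure (μs i)]
    (hconv : ∀ A ∈ 𝒞, Tendsto (fun i ↦ μs i A) L (𝓝 (μ A))) {G : Set α} (hG : IsOpen G) :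
    μ G ≤ L.liminf fun i ↦ μs i G := by
  set S := {A ∈ 𝒞 | A ⊆ G}
  set T := {F : Set (Set α) | F.Finite ∧ F ⊆ S}
  have hG_eq : G = ⋃ F ∈ T, ⋃₀ F := by
    refine (hbasis.open_eq_sUnion' hG).trans (Set.Subset.antisymm ?_ ?_)
    · rintro x ⟨A, hA, hxA⟩
      exact Set.mem_biUnion (x := {A}) ⟨Set.finite_singleton A, Set.singleton_subset_iff.2 hA⟩
        (Set.mem_sUnion_of_mem hxA rfl)
    · exact Set.iUnion₂_subset fun F hF ↦ Set.sUnion_mono hF.2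
  have hdir : DirectedOn (Function.onFun (· ⊆ ·) fun F : Set (Set α) ↦ ⋃₀ F) T :=
    fun F₁ h₁ F₂ h₂ ↦ ⟨F₁ ∪ F₂, ⟨h₁.1.union h₂.1, Set.union_subset h₁.2 h₂.2⟩,
      Set.sUnion_mono Set.subset_union_left, Set.sUnion_mono Set.subset_union_right⟩
  rcases L.eq_or_neBot with rfl | hL
  · simp
  calc μ G = ⨆ F ∈ T, μ (⋃₀ F) := by
        rw [hG_eq, measure_biUnion_eq_iSup ((Set.countable_ofPred_finite_subset
          (hcount.mono (Set.sep_subset _ _)))) hdir]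
    _ ≤ L.liminf fun i ↦ μs i G := iSup₂_le fun F hF ↦ by
        have hlim := tendsto_measure_inter_sUnion_of_forall_tendsto
          (fun A hA ↦ (hbasis.isOpen hA).measurableSet) hinter hconv hF.1
          (hF.2.trans (Set.sep_subset _ _)) huniv
        rw [Set.univ_inter] at hlim
        rw [← hlim.liminf_eq]
        exact liminf_le_liminf (.of_forall fun i ↦
          measure_mono (Set.sUnion_subset fun A hA ↦ (hF.2 hA).2))

theorem tendsto_integral_of_forall_tendsto_of_isTopologicalBasis [OpensMeasurableSpace α]
    [L.IsCountablyGenerated] (hcount : 𝒞.Countable)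
    (hbasis : IsTopologicalBasis 𝒞) (huniv : Set.univ ∈ 𝒞)
    (hinter : ∀ A ∈ 𝒞, ∀ B ∈ 𝒞, A ∩ B ∈ 𝒞) {μ : Measure α} {μs : ι → Measure α}
    [IsProbabilityMeasure μ] [∀ i, IsProbabilityMeasure (μs i)]
    (hconv : ∀ A ∈ 𝒞, Tendsto (fun i ↦ μs i A) L (𝓝 (μ A))) (f : α →ᵇ ℝ) :
    Tendsto (fun i ↦ ∫ x, f x ∂μs i) L (𝓝 (∫ x, f x ∂μ)) :=
  ProbabilityMeasure.tendsto_iff_forall_integral_tendsto.1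
    (tendsto_of_forall_isOpen_le_liminf' (μ := ⟨μ, ‹_›⟩) (μs := fun i ↦ ⟨μs i, inferInstance⟩)
      fun _ hG ↦ measure_le_liminf_of_forall_tendsto_of_isTopologicalBasis hcount hbasis huniv
        hinter hconv hG) f

end Basis

end MeasureTheory

section FiniteInters

variable {α : Type*} {τ : Set (Set α)}

def finiteInters (τ : Set (Set α)) : Set (Set α) :=
  (fun F ↦ ⋂₀ F) '' {F | F.Finite ∧ F ⊆ τ}

theorem univ_mem_finiteInters : Set.univ ∈ finiteInters τ :=
  ⟨∅, ⟨Set.finite_empty, Set.empty_subset _⟩, Set.sInter_empty⟩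

theorem inter_mem_finiteInters {A B : Set α} (hA : A ∈ finiteInters τ)
    (hB : B ∈ finiteInters τ) : A ∩ B ∈ finiteInters τ := by
  obtain ⟨F, hF, rfl⟩ := hA
  obtain ⟨G, hG, rfl⟩ := hB
  exact ⟨F ∪ G, ⟨hF.1.union hG.1, Set.union_subset hF.2 hG.2⟩, Set.sInter_union F G⟩

theorem Set.Countable.finiteInters (hτ : τ.Countable) : (finiteInters τ).Countable :=
  (Set.countable_ofPred_finite_subset hτ).image _

theorem TopologicalSpace.IsTopologicalBasis.finiteInters [TopologicalSpace α]
    (hτ : IsTopologicalBasis τ) : IsTopologicalBasis (finiteInters τ) :=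
  isTopologicalBasis_of_subbasis hτ.eq_generateFrom

theorem exists_iInter_fin_succ_eq_of_mem_finiteInters (huniv : Set.univ ∈ τ) {A : Set α}
    (hA : A ∈ finiteInters τ) :
    ∃ (N : ℕ) (O : Fin (N + 1) → Set α), (∀ j, O j ∈ τ) ∧ ⋂ j, O j = A := by
  obtain ⟨F, ⟨hF, hFτ⟩, rfl⟩ := hA
  -- padding with `univ` makes the index set nonempty
  obtain ⟨n, O, hO⟩ := (hF.insert Set.univ).fin_embedding
  obtain ⟨N, rfl⟩ : ∃ N, n = N + 1 := Nat.exists_eq_succ_of_ne_zero fun hn ↦ by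
    subst hn
    simpa using hO.symm.subset (Set.mem_insert _ _)
  refine ⟨N, O, fun j ↦ Set.insert_subset huniv hFτ (hO ▸ Set.mem_range_self j), ?_⟩
  rw [← Set.sInter_range, hO, Set.sInter_insert, Set.univ_inter]

end FiniteInters

section Disintegration

variable {S1 S2 S3 : Type*} [MeasurableSpace S1] [MeasurableSpace S2]

def IsDisintegration [MeasurableSpace S3] (P : S3 → Measure (S1 × S2))
    (H : S2 → S3 → Measure S1) : Prop :=
  ∀ (t : S3) (B : Set S1) (C : Set S2), MeasurableSet B → MeasurableSet C →
    P t (B ×ˢ C) = ∫⁻ s2 in C, H s2 t B ∂((P t).map Prod.snd)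

noncomputable def sliceDeviation [TopologicalSpace S2] (P : S3 → Measure (S1 × S2))
    (B : Set S1) (t t' : S3) : ℝ :=
  ⨆ (C : Set S2) (_ : IsOpen C), |(P t).real (B ×ˢ C) - (P t').real (B ×ˢ C)|

theorem map_snd_restrict_prod_univ_apply (ρ : Measure (S1 × S2)) (B : Set S1) {C : Set S2}
    (hC : MeasurableSet C) : (ρ.restrict (B ×ˢ Set.univ)).map Prod.snd C = ρ (B ×ˢ C) := by
  rw [Measure.map_apply measurable_snd hC, Measure.restrict_apply (measurable_snd hC)]
  congr 1
  ext x
  simp [and_comm]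

theorem abs_measureReal_prod_sub_le_sliceDeviation [TopologicalSpace S2]
    [PseudoMetrizableSpace S2] [BorelSpace S2] (P : S3 → Measure (S1 × S2))
    [∀ t, IsProbabilityMeasure (P t)] (B : Set S1) (t t' : S3) {C : Set S2}
    (hC : MeasurableSet C) :
    |(P t).real (B ×ˢ C) - (P t').real (B ×ˢ C)| ≤ sliceDeviation P B t t' := by
  set μ := ((P t).restrict (B ×ˢ Set.univ)).map Prod.snd
  set ν := ((P t').restrict (B ×ˢ Set.univ)).map Prod.snd
  have hslice (U : Set S2) (hU : MeasurableSet U) :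
      |μ.real U - ν.real U| = |(P t).real (B ×ˢ U) - (P t').real (B ×ˢ U)| := by
    simp only [measureReal_def, μ, ν, map_snd_restrict_prod_univ_apply _ _ hU]
  have hbdd : BddAbove (Set.range fun U : Set S2 ↦ ⨆ _ : IsOpen U,
      |(P t).real (B ×ˢ U) - (P t').real (B ×ˢ U)|) := ⟨1, by
    rintro _ ⟨U, rfl⟩
    exact Real.iSup_le (fun _ ↦ abs_measureReal_sub_measureReal_le_one _ _) zero_le_one⟩
  rw [← hslice C hC]
  refine abs_measureReal_sub_le_of_forall_isOpen (fun U hU ↦ ?_) hC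
  rw [hslice U hU.measurableSet]
  exact (ciSup_pos hU).symm.le.trans (le_ciSup hbdd U)

variable [MeasurableSpace S3] {P : S3 → Measure (S1 × S2)} {H : S2 → S3 → Measure S1}

theorem IsDisintegration.setIntegral_toReal_eq (hdis : IsDisintegration P H)
    (hH : Measurable (Function.uncurry H)) [∀ s2 t, IsFiniteMeasure (H s2 t)] (t : S3)
    {B : Set S1} {C : Set S2} (hB : MeasurableSet B) (hC : MeasurableSet C) :
    ∫ s2 in C, (H s2 t B).toReal ∂(P t).map Prod.snd = (P t).real (B ×ˢ C) := by
  rw [measureReal_def, hdis t B C hB hC, integral_toReal]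
  · exact ((Measure.measurable_coe hB).comp hH.of_uncurry_right).aemeasurable
  · exact .of_forall fun s2 ↦ measure_lt_top _ _

variable [TopologicalSpace S2] [PseudoMetrizableSpace S2] [BorelSpace S2]
  [∀ t, IsProbabilityMeasure (P t)] [∀ s2 t, IsProbabilityMeasure (H s2 t)]

theorem IsDisintegration.integral_abs_sub_le (hdis : IsDisintegration P H)
    (hH : Measurable (Function.uncurry H)) (t t' : S3) {B : Set S1} (hB : MeasurableSet B) :
    ∫ s2, |(H s2 t B).toReal - (H s2 t' B).toReal| ∂(P t').map Prod.snd
      ≤ 2 * sliceDeviation P B t t' + 3 * sliceDeviation P Set.univ t t' := by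
  have hdens (u : S3) : Measurable fun s2 ↦ (H s2 u B).toReal :=
    ((Measure.measurable_coe hB).comp hH.of_uncurry_right).ennreal_toReal
  refine integral_abs_sub_le_of_forall_abs_setIntegral_sub_le (μ := (P t').map Prod.snd)
    (ν := (P t).map Prod.snd) (hdens t) (hdens t')
    (fun _ ↦ ENNReal.toReal_nonneg) (fun _ ↦ measureReal_le_one) (fun _ ↦ ENNReal.toReal_nonneg)
    (fun _ ↦ measureReal_le_one) (fun A hA ↦ ?_) (fun A hA ↦ ?_)
  · rw [hdis.setIntegral_toReal_eq hH t hB hA, hdis.setIntegral_toReal_eq hH t' hB hA]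
    exact abs_measureReal_prod_sub_le_sliceDeviation P B t t' hA
  · rw [map_measureReal_apply measurable_snd hA, map_measureReal_apply measurable_snd hA,
      ← Set.univ_prod]
    exact abs_measureReal_prod_sub_le_sliceDeviation P Set.univ t t' hA

theorem IsDisintegration.tendsto_lintegral_edist (hdis : IsDisintegration P H)
    (hH : Measurable (Function.uncurry H)) {s3 : S3} {s3n : ℕ → S3} {B : Set S1}
    (hB : MeasurableSet B) (hdevB : Tendsto (fun n ↦ sliceDeviation P B (s3n n) s3) atTop (𝓝 0))
    (hdev : Tendsto (fun n ↦ sliceDeviation P Set.univ (s3n n) s3) atTop (𝓝 0)) :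
    Tendsto (fun n ↦ ∫⁻ s2, edist (H s2 (s3n n) B).toReal (H s2 s3 B).toReal
      ∂(P s3).map Prod.snd) atTop (𝓝 0) := by
  have hdens (u : S3) : Measurable fun s2 ↦ (H s2 u B).toReal :=
    ((Measure.measurable_coe hB).comp hH.of_uncurry_right).ennreal_toReal
  have hL1 : Tendsto (fun n ↦ ∫ s2, |(H s2 (s3n n) B).toReal - (H s2 s3 B).toReal|
      ∂(P s3).map Prod.snd) atTop (𝓝 0) := by
    refine squeeze_zero (fun n ↦ integral_nonneg fun _ ↦ abs_nonneg _)
      (fun n ↦ hdis.integral_abs_sub_le hH (s3n n) s3 hB) ?_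
    simpa using (hdevB.const_mul 2).add (hdev.const_mul 3)
  rw [← ENNReal.ofReal_zero]
  refine (ENNReal.tendsto_ofReal hL1).congr fun n ↦ ?_
  simp_rw [edist_dist, Real.dist_eq]
  refine ofReal_integral_eq_lintegral_ofReal
    (.of_bound ((hdens _).sub (hdens s3)).abs.aestronglyMeasurable 1 (.of_forall fun s2 ↦ ?_))
    (.of_forall fun _ ↦ abs_nonneg _)
  rw [Real.norm_eq_abs, abs_abs]
  exact abs_measureReal_sub_measureReal_le_one B B

theorem IsDisintegration.exists_strictMono_ae_tendsto (hdis : IsDisintegration P H)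
    (hH : Measurable (Function.uncurry H)) {𝒞 : Set (Set S1)} (hcount : 𝒞.Countable)
    (hmeas : ∀ A ∈ 𝒞, MeasurableSet A) {s3 : S3} {s3n : ℕ → S3}
    (hdev𝒞 : ∀ A ∈ 𝒞, Tendsto (fun n ↦ sliceDeviation P A (s3n n) s3) atTop (𝓝 0))
    (hdev : Tendsto (fun n ↦ sliceDeviation P Set.univ (s3n n) s3) atTop (𝓝 0)) :
    ∃ φ : ℕ → ℕ, StrictMono φ ∧ ∀ᵐ s2 ∂(P s3).map Prod.snd,
      ∀ A ∈ 𝒞, Tendsto (fun k ↦ H s2 (s3n (φ k)) A) atTop (𝓝 (H s2 s3 A)) := by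
  have := hcount.to_subtype
  have hdens (t : S3) (A : 𝒞) : Measurable fun s2 ↦ (H s2 t A).toReal :=
    ((Measure.measurable_coe (hmeas A A.2)).comp hH.of_uncurry_right).ennreal_toReal
  obtain ⟨φ, hφ, hae⟩ := exists_strictMono_ae_tendsto_zero_of_tendsto_lintegral
    (g := fun n (A : 𝒞) s2 ↦ edist (H s2 (s3n n) A).toReal (H s2 s3 A).toReal)
    (fun n A ↦ ((hdens _ A).edist (hdens s3 A)).aemeasurable)
    fun A ↦ hdis.tendsto_lintegral_edist hH (hmeas A A.2) (hdev𝒞 A A.2) hdev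
  refine ⟨φ, hφ, hae.mono fun s2 hs2 A hA ↦ ?_⟩
  exact (ENNReal.tendsto_toReal_iff (fun _ ↦ measure_ne_top _ _) (measure_ne_top _ _)).1
    (tendsto_iff_edist_tendsto_0.2 (hs2 ⟨A, hA⟩))

end Disintegration

theorem stmt16_general {S1 S2 S3 : Type*}
    [MetricSpace S1] [MeasurableSpace S1] [BorelSpace S1]
    [MetricSpace S2] [MeasurableSpace S2] [BorelSpace S2]
    [MetricSpace S3] [MeasurableSpace S3]
    (P : S3 → Measure (S1 × S2))
    (hPprob : ∀ s, IsProbabilityMeasure (P s))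
    (H : S2 → S3 → Measure S1) (hHm : Measurable (Function.uncurry H))
    (hHprob : ∀ s2 s3, IsProbabilityMeasure (H s2 s3))
    (hdis : ∀ (s3 : S3) (B : Set S1) (C : Set S2), MeasurableSet B → MeasurableSet C →
      P s3 (B ×ˢ C) = ∫⁻ s2 in C, H s2 s3 B ∂((P s3).map Prod.snd))
    (τb : Set (Set S1)) (hc : τb.Countable)
    (hb : TopologicalSpace.IsTopologicalBasis τb) (huniv : Set.univ ∈ τb)
    (s3 : S3)
    (heq : ∀ (N : ℕ) (O : Fin (N + 1) → Set S1), (∀ j, O j ∈ τb) →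
      Tendsto (fun t => ⨆ (C : Set S2) (_ : IsOpen C),
        |(P t ((⋂ j, O j) ×ˢ C)).toReal - (P s3 ((⋂ j, O j) ×ˢ C)).toReal|)
        (𝓝 s3) (𝓝 0)) :
    ∀ s3n : ℕ → S3, Tendsto s3n atTop (𝓝 s3) →
      ∃ φ : ℕ → ℕ, StrictMono φ ∧ ∃ Cs : Set S2, MeasurableSet Cs ∧
        ((P s3).map Prod.snd) Cs = 1 ∧
        ∀ s2 ∈ Cs, ∀ f : S1 →ᵇ ℝ,
          Tendsto (fun k => ∫ x, f x ∂(H s2 (s3n (φ k)))) atTop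
            (𝓝 (∫ x, f x ∂(H s2 s3))) := by
  intro s3n hs3n
  have := hPprob
  have := hHprob
  have : IsProbabilityMeasure ((P s3).map Prod.snd) :=
    Measure.isProbabilityMeasure_map measurable_snd.aemeasurable
  have hdev : ∀ A ∈ finiteInters τb,
      Tendsto (fun n ↦ sliceDeviation P A (s3n n) s3) atTop (𝓝 0) := by
    intro A hA
    obtain ⟨N, O, hO, rfl⟩ := exists_iInter_fin_succ_eq_of_mem_finiteInters huniv hA
    simpa only [sliceDeviation, measureReal_def, Function.comp_def] using (heq N O hO).comp hs3n
  obtain ⟨φ, hφ, hae⟩ := IsDisintegration.exists_strictMono_ae_tendsto hdis hHm hc.finiteInters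
    (fun A hA ↦ (hb.finiteInters.isOpen hA).measurableSet) hdev (hdev _ univ_mem_finiteInters)
  obtain ⟨N, hNbad, hN, hN0⟩ := exists_measurable_superset_of_null (ae_iff.1 hae)
  refine ⟨φ, hφ, Nᶜ, hN.compl, (prob_compl_eq_one_iff hN).2 hN0, fun s2 hs2 ↦ ?_⟩
  exact tendsto_integral_of_forall_tendsto_of_isTopologicalBasis hc.finiteInters
    hb.finiteInters univ_mem_finiteInters (fun _ hA _ hB ↦ inter_mem_finiteInters hA hB)
    (not_not.1 fun h ↦ hs2 (hNbad h))

theorem stmt16 {S1 S2 S3 : Type*}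
    [MetricSpace S1] [SecondCountableTopology S1] [MeasurableSpace S1] [BorelSpace S1]
    [MetricSpace S2] [SecondCountableTopology S2] [MeasurableSpace S2] [BorelSpace S2]
    [MetricSpace S3] [SecondCountableTopology S3] [MeasurableSpace S3] [BorelSpace S3]
    (P : S3 → Measure (S1 × S2)) (hPm : Measurable P)
    (hPprob : ∀ s, IsProbabilityMeasure (P s))
    (H : S2 → S3 → Measure S1) (hHm : Measurable (Function.uncurry H))
    (hHprob : ∀ s2 s3, IsProbabilityMeasure (H s2 s3))
    (hdis : ∀ (s3 : S3) (B : Set S1) (C : Set S2), MeasurableSet B → MeasurableSet C →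
      P s3 (B ×ˢ C) = ∫⁻ s2 in C, H s2 s3 B ∂((P s3).map Prod.snd))
    (τb : Set (Set S1)) (hc : τb.Countable)
    (hb : TopologicalSpace.IsTopologicalBasis τb) (huniv : Set.univ ∈ τb)
    (s3 : S3)
    (heq : ∀ (N : ℕ) (O : Fin (N + 1) → Set S1), (∀ j, O j ∈ τb) →
      Tendsto (fun t => ⨆ (C : Set S2) (_ : IsOpen C),
        |(P t ((⋂ j, O j) ×ˢ C)).toReal - (P s3 ((⋂ j, O j) ×ˢ C)).toReal|)
        (𝓝 s3) (𝓝 0)) :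
    ∀ s3n : ℕ → S3, Tendsto s3n atTop (𝓝 s3) →
      ∃ φ : ℕ → ℕ, StrictMono φ ∧ ∃ Cs : Set S2, MeasurableSet Cs ∧
        ((P s3).map Prod.snd) Cs = 1 ∧
        ∀ s2 ∈ Cs, ∀ f : S1 →ᵇ ℝ,
          Tendsto (fun k => ∫ x, f x ∂(H s2 (s3n (φ k)))) atTop
            (𝓝 (∫ x, f x ∂(H s2 s3))) :=
  stmt16_general P hPprob H hHm hHprob hdis τb hc hb huniv s3 heq
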